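/- arXiv:2503.12733 — 2 statements merged into one kernel-verified Lean document; each statement's English description precedes it below -/
import Mathlib

section
/- Let H be a finite-dimensional real inner product space, let 𝒰 ⊆ H be a nonempty closed convex set, let R : H → ℝ ∪ {+∞} be a proper lower semicontinuous convex function with dom R ∩ 𝒰 nonempty, and let f : H → ℝ be differentiable with L-Lipschitz gradient for some L > 0. Fix U₀ ∈ 𝒰 and let U' be a minimizer over U ∈ 𝒰 of ⟨∇f(U₀), U⟩ + (L/2)‖U − U₀‖² + R(U). Then f(U') + R(U') + (L/2)‖U' − U₀‖² ≤ f(U₀) + R(U₀). -/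
/-! The prox objective `ψ U = L/2 ‖U - U₀‖² + ⟪∇f U₀, U⟫ + R U` is `L`-strongly convex, so its
minimizer `U'` over `𝒰` satisfies `ψ U' + L/2 ‖U₀ - U'‖² ≤ ψ U₀ = ⟪∇f U₀, U₀⟫ + R U₀`. Adding the
descent lemma `f U' ≤ f U₀ + ⟪∇f U₀, U' - U₀⟫ + L/2 ‖U' - U₀‖²` gives the claim. -/

open scoped RealInnerProductSpace
open Filter Topology

section Descent
variable {E : Type*} [NormedAddCommGroup E] [NormedSpace ℝ E]

theorem image_le_add_fderiv_add_sq {f : E → ℝ} {f' : E → E →L[ℝ] ℝ} {L : ℝ} {x y : E}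
    (hf : ∀ z, HasFDerivAt f (f' z) z) (hlip : ∀ z, ‖f' z - f' x‖ ≤ L * ‖z - x‖) :
    f y ≤ f x + f' x (y - x) + L / 2 * ‖y - x‖ ^ 2 := by
  set v := y - x
  let φ : ℝ → ℝ := fun t ↦ f (x + t • v) - t * f' x v - L / 2 * t ^ 2 * ‖v‖ ^ 2
  have hφ : ∀ t, HasDerivAt φ (f' (x + t • v) v - f' x v - L * t * ‖v‖ ^ 2) t := by
    intro t
    have hline : HasDerivAt (fun s : ℝ ↦ x + s • v) v t := by
      simpa using ((hasDerivAt_id t).smul_const v).const_add x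
    refine ((((hf _).comp_hasDerivAt t hline).sub ((hasDerivAt_id t).mul_const (f' x v))).sub
      (((hasDerivAt_pow 2 t).const_mul (L / 2)).mul_const (‖v‖ ^ 2))).congr_deriv ?_
    simp only [Nat.cast_ofNat, one_mul]; ring
  have hφ' : ∀ t ∈ interior (Set.Icc (0 : ℝ) 1),
      f' (x + t • v) v - f' x v - L * t * ‖v‖ ^ 2 ≤ 0 := by
    intro t ht
    rw [interior_Icc] at ht
    have := calc f' (x + t • v) v - f' x v = (f' (x + t • v) - f' x) v := rfl
      _ ≤ ‖f' (x + t • v) - f' x‖ * ‖v‖ :=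
        (le_abs_self _).trans ((f' (x + t • v) - f' x).le_opNorm v)
      _ ≤ L * ‖x + t • v - x‖ * ‖v‖ := by gcongr; exact hlip _
      _ = L * t * ‖v‖ ^ 2 := by
        rw [add_sub_cancel_left, norm_smul, Real.norm_of_nonneg ht.1.le]; ring
    linarith
  have hanti := antitoneOn_of_hasDerivWithinAt_nonpos (convex_Icc 0 1)
    (HasDerivAt.continuousOn fun t _ ↦ hφ t) (fun t _ ↦ (hφ t).hasDerivWithinAt) hφ'
  have h10 : φ 1 ≤ φ 0 :=
    hanti (Set.left_mem_Icc.2 zero_le_one) (Set.right_mem_Icc.2 zero_le_one) zero_le_one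
  norm_num [φ, v] at h10
  linarith [map_sub (f' x) y x]

theorem image_le_add_inner_add_sq {H : Type*} [NormedAddCommGroup H] [InnerProductSpace ℝ H]
    [CompleteSpace H] {f : H → ℝ} {f' : H → H} {L : ℝ} {x y : H}
    (hf : ∀ z, HasGradientAt f (f' z) z) (hlip : ∀ z, ‖f' z - f' x‖ ≤ L * ‖z - x‖) :
    f y ≤ f x + ⟪f' x, y - x⟫ + L / 2 * ‖y - x‖ ^ 2 :=
  image_le_add_fderiv_add_sq (fun z ↦ (hf z).hasFDerivAt) fun z ↦ by
    rw [← map_sub, LinearIsometryEquiv.norm_map]; exact hlip z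

end Descent

section StrongConvexity
variable {E : Type*} [NormedAddCommGroup E]

theorem StrongConvexOn.add_convexOn [NormedSpace ℝ E] {s : Set E} {m : ℝ} {f g : E → ℝ}
    (hf : StrongConvexOn s m f) (hg : ConvexOn ℝ s g) : StrongConvexOn s m (f + g) := by
  simpa [StrongConvexOn] using hf.add hg.uniformConvexOn_zero

theorem StrongConvexOn.add_sq_le_of_isMinOn [NormedSpace ℝ E] {s : Set E} {m : ℝ} {f : E → ℝ}
    {x y : E} (hf : StrongConvexOn s m f) (hmin : IsMinOn f s x) (hx : x ∈ s) (hy : y ∈ s) :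
    f x + m / 2 * ‖y - x‖ ^ 2 ≤ f y := by
  set K := m / 2 * ‖y - x‖ ^ 2
  have hstep : ∀ t ∈ Set.Ioc (0 : ℝ) 1, f x + (1 - t) * K ≤ f y := by
    rintro t ⟨ht₀, ht₁⟩
    have hab : t + (1 - t) = 1 := add_sub_cancel t 1
    have hmid : f x ≤ t * f y + (1 - t) * f x - t * (1 - t) * K := by
      simpa only [smul_eq_mul] using (hmin (hf.1 hy hx ht₀.le (sub_nonneg.2 ht₁) hab)).trans
        (hf.2 hy hx ht₀.le (sub_nonneg.2 ht₁) hab)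
    exact le_of_mul_le_mul_left (by linarith) ht₀
  have hlim : Tendsto (fun t : ℝ ↦ f x + (1 - t) * K) (𝓝[>] 0) (𝓝 (f x + K)) :=
    tendsto_nhdsWithin_of_tendsto_nhds <|
      (by fun_prop : Continuous fun t : ℝ ↦ f x + (1 - t) * K).tendsto' 0 _ (by simp)
  exact le_of_tendsto hlim (eventually_of_mem (Ioc_mem_nhdsGT zero_lt_one) hstep)

theorem strongConvexOn_sq_norm_sub [InnerProductSpace ℝ E] {s : Set E} (hs : Convex ℝ s)
    (m : ℝ) (c : E) : StrongConvexOn s m fun x ↦ m / 2 * ‖x - c‖ ^ 2 := by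
  rw [strongConvexOn_iff_convex]
  refine ((((-m) • innerSL ℝ c : E →L[ℝ] ℝ) : E →ₗ[ℝ] ℝ).convexOn hs).add_const
    (m / 2 * ‖c‖ ^ 2) |>.congr fun x _ ↦ ?_
  simp only [neg_smul, ContinuousLinearMap.toLinearMap_neg, ContinuousLinearMap.toLinearMap_smul,
    ContinuousLinearMap.toLinearMap_innerSL_apply, LinearMap.coe_neg, LinearMap.coe_smul,
    coe_innerₛₗ_apply, Pi.add_apply, Pi.neg_apply, Pi.smul_apply, smul_eq_mul, norm_sub_sq_real,
    real_inner_comm]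
  ring

end StrongConvexity

theorem convexOn_toReal_inter_ne_top {E : Type*} [AddCommGroup E] [Module ℝ E] {R : E → EReal}
    (hR_bot : ∀ x, R x ≠ ⊥)
    (hR : ∀ x y : E, ∀ a b : ℝ, 0 ≤ a → 0 ≤ b → a + b = 1 →
      R (a • x + b • y) ≤ (a : EReal) * R x + (b : EReal) * R y)
    {s : Set E} (hs : Convex ℝ s) :
    ConvexOn ℝ (s ∩ {x | R x ≠ ⊤}) fun x ↦ (R x).toReal := by
  have hcomb : ∀ {x y : E}, R x ≠ ⊤ → R y ≠ ⊤ → ∀ {a b : ℝ}, 0 ≤ a → 0 ≤ b → a + b = 1 →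
      R (a • x + b • y) ≤ ((a * (R x).toReal + b * (R y).toReal : ℝ) : EReal) := by
    intro x y hx hy a b ha hb hab
    rw [EReal.coe_add, EReal.coe_mul, EReal.coe_mul, EReal.coe_toReal hx (hR_bot x),
      EReal.coe_toReal hy (hR_bot y)]
    exact hR x y a b ha hb hab
  refine ⟨hs.inter fun x hx y hy a b ha hb hab ↦
    ne_top_of_le_ne_top (EReal.coe_ne_top _) (hcomb hx hy ha hb hab), ?_⟩
  rintro x ⟨-, hx⟩ y ⟨-, hy⟩ a b ha hb hab
  simpa only [smul_eq_mul, EReal.toReal_coe] using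
    EReal.toReal_le_toReal (hcomb hx hy ha hb hab) (hR_bot _) (EReal.coe_ne_top _)

theorem prox_grad_step_descent_general
    {H : Type*} [NormedAddCommGroup H] [InnerProductSpace ℝ H] [FiniteDimensional ℝ H]
    (𝒰 : Set H) (h𝒰convex : Convex ℝ 𝒰)
    (R : H → EReal)
    (hRnebot : ∀ x, R x ≠ ⊥)
    (hRconvex : ∀ x y : H, ∀ a b : ℝ, 0 ≤ a → 0 ≤ b → a + b = 1 →
      R (a • x + b • y) ≤ (a : EReal) * R x + (b : EReal) * R y)
    (f : H → ℝ) (f' : H → H) (hf : ∀ x, HasGradientAt f (f' x) x)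
    (L : ℝ)
    (hlip : ∀ x y : H, ‖f' x - f' y‖ ≤ L * ‖x - y‖)
    (U₀ : H) (hU₀ : U₀ ∈ 𝒰) (U' : H) (hU'mem : U' ∈ 𝒰)
    (hmin : ∀ U ∈ 𝒰,
      ((⟪f' U₀, U'⟫ + (L / 2) * ‖U' - U₀‖ ^ 2 : ℝ) : EReal) + R U' ≤
      ((⟪f' U₀, U⟫ + (L / 2) * ‖U - U₀‖ ^ 2 : ℝ) : EReal) + R U) :
    ((f U' + (L / 2) * ‖U' - U₀‖ ^ 2 : ℝ) : EReal) + R U' ≤ ((f U₀ : ℝ) : EReal) + R U₀ := by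
  by_cases hU₀top : R U₀ = ⊤
  · rw [hU₀top, EReal.add_top_of_ne_bot (EReal.coe_ne_bot _)]
    exact le_top
  have hreal : ∀ {U}, R U ≠ ⊤ → R U = ((R U).toReal : EReal) := fun h ↦
    (EReal.coe_toReal h (hRnebot _)).symm
  have hU'top : R U' ≠ ⊤ := fun h ↦ by
    have := hmin U₀ hU₀
    rw [h, EReal.add_top_of_ne_bot (EReal.coe_ne_bot _), top_le_iff] at this
    exact (EReal.add_lt_top (EReal.coe_ne_top _) hU₀top).ne this
  -- `toReal` sends `⊤` to the junk value `0`, so the real objective lives on `𝒰 ∩ dom R`.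
  set s := 𝒰 ∩ {U | R U ≠ ⊤}
  set ψ : H → ℝ := fun U ↦ L / 2 * ‖U - U₀‖ ^ 2 + ⟪f' U₀, U⟫ + (R U).toReal
  have hRs : ConvexOn ℝ s fun U ↦ (R U).toReal :=
    convexOn_toReal_inter_ne_top hRnebot hRconvex h𝒰convex
  have hψconvex : StrongConvexOn s L ψ :=
    ((strongConvexOn_sq_norm_sub hRs.1 L U₀).add_convexOn
      (((innerSL ℝ (f' U₀) : H →L[ℝ] ℝ) : H →ₗ[ℝ] ℝ).convexOn hRs.1)).add_convexOn hRs
  have hψmin : IsMinOn ψ s U' := isMinOn_iff.2 fun U ⟨hU, hUtop⟩ ↦ by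
    have := hmin U hU
    rw [hreal hU'top, hreal hUtop, ← EReal.coe_add, ← EReal.coe_add, EReal.coe_le_coe_iff] at this
    simp only [ψ]; linarith
  have hstrong := hψconvex.add_sq_le_of_isMinOn hψmin ⟨hU'mem, hU'top⟩ ⟨hU₀, hU₀top⟩
  have hdescent := image_le_add_inner_add_sq (y := U') hf fun z ↦ hlip z U₀
  rw [hreal hU'top, hreal hU₀top, ← EReal.coe_add, ← EReal.coe_add, EReal.coe_le_coe_iff]
  simp only [ψ, sub_self, norm_zero, inner_sub_right, norm_sub_rev U₀ U'] at hstrong hdescent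
  linarith

/-- descent property of one proximal gradient step for an
`L`-smooth function `f` plus a proper lsc convex extended-real-valued
regularizer `R`, minimized over a nonempty closed convex set `𝒰`. -/
theorem prox_grad_step_descent
    {H : Type*} [NormedAddCommGroup H] [InnerProductSpace ℝ H] [FiniteDimensional ℝ H]
    (𝒰 : Set H) (h𝒰ne : 𝒰.Nonempty) (h𝒰closed : IsClosed 𝒰) (h𝒰convex : Convex ℝ 𝒰)
    (R : H → EReal)
    (hRlsc : LowerSemicontinuous R)
    (hRnebot : ∀ x, R x ≠ ⊥)
    (hRconvex : ∀ x y : H, ∀ a b : ℝ, 0 ≤ a → 0 ≤ b → a + b = 1 →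
      R (a • x + b • y) ≤ (a : EReal) * R x + (b : EReal) * R y)
    (hdom : ∃ x ∈ 𝒰, R x ≠ ⊤)
    (f : H → ℝ) (f' : H → H) (hf : ∀ x, HasGradientAt f (f' x) x)
    (L : ℝ) (hL : 0 < L)
    (hlip : ∀ x y : H, ‖f' x - f' y‖ ≤ L * ‖x - y‖)
    (U₀ : H) (hU₀ : U₀ ∈ 𝒰) (U' : H) (hU'mem : U' ∈ 𝒰)
    (hmin : ∀ U ∈ 𝒰,
      ((⟪f' U₀, U'⟫ + (L / 2) * ‖U' - U₀‖ ^ 2 : ℝ) : EReal) + R U' ≤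
      ((⟪f' U₀, U⟫ + (L / 2) * ‖U - U₀‖ ^ 2 : ℝ) : EReal) + R U) :
    ((f U' + (L / 2) * ‖U' - U₀‖ ^ 2 : ℝ) : EReal) + R U' ≤ ((f U₀ : ℝ) : EReal) + R U₀ :=
  prox_grad_step_descent_general 𝒰 h𝒰convex R hRnebot hRconvex f f' hf L hlip U₀ hU₀ U' hU'mem hmin
end

section
/- Let H be a finite-dimensional real inner product space, let f : H → ℝ be differentiable with L-Lipschitz gradient for some L > 0, let p > 0, β > 0, and fix Y, V, W₀ ∈ H. Define ℒ(W) := (1/p) f(W) + ⟨Y, W − V⟩ + (β/2)‖W − V‖². Let W' be the minimizer over W ∈ H of ⟨(1/p)∇f(W₀) + Y, W⟩ + (L/(2p))‖W − W₀‖² + (β/2)‖W − V‖². Then ℒ(W') + (L/(2p))‖W' − W₀‖² ≤ ℒ(W₀). -/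
/-!
Write `Δ = W' - W₀`. The descent lemma for the `L`-smooth `f` bounds `(1/p) f W'` by the value at
`W₀` of the linearization of `(1/p) f` plus `(L/(2p)) ‖Δ‖²`. The proximal objective `q` is a quadratic
with Hessian `2 (L/(2p) + β/2)`, so its minimizer `W'` satisfies the exact identity
`q W₀ = q W' + (L/(2p) + β/2) ‖Δ‖²`. Adding the two leaves a slack of `(β/2) ‖Δ‖² ≥ 0`.
-/

open scoped RealInnerProductSpace

section Descent

variable {E : Type*} [NormedAddCommGroup E] [InnerProductSpace ℝ E] [CompleteSpace E]

lemma HasGradientAt.hasDerivAt_comp_add_smul {f : E → ℝ} {g x v : E} {t : ℝ}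
    (hf : HasGradientAt f g (x + t • v)) :
    HasDerivAt (fun s : ℝ => f (x + s • v)) ⟪g, v⟫ t := by
  have hline : HasDerivAt (fun s : ℝ => x + s • v) v t := by
    simpa using ((hasDerivAt_id t).smul_const v).const_add x
  have hcomp := hf.hasFDerivAt.comp_hasDerivAt t hline
  simp only [Function.comp_def, InnerProductSpace.toDual_apply_apply] at hcomp
  exact hcomp

theorem le_add_inner_add_sq_of_lipschitz_gradient {f : E → ℝ} {f' : E → E} {L : ℝ}
    (hf : ∀ x, HasGradientAt f (f' x) x) (hlip : ∀ x y, ‖f' x - f' y‖ ≤ L * ‖x - y‖)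
    (x y : E) : f y ≤ f x + ⟪f' x, y - x⟫ + L / 2 * ‖y - x‖ ^ 2 := by
  set v := y - x
  let g : ℝ → ℝ := fun t => f (x + t • v) - t * ⟪f' x, v⟫ - L / 2 * t ^ 2 * ‖v‖ ^ 2
  have hg : ∀ t, HasDerivAt g (⟪f' (x + t • v) - f' x, v⟫ - L * t * ‖v‖ ^ 2) t := by
    intro t
    refine ((((hf (x + t • v)).hasDerivAt_comp_add_smul).sub
      ((hasDerivAt_id t).mul_const ⟪f' x, v⟫)).sub
      (((hasDerivAt_pow 2 t).const_mul (L / 2)).mul_const (‖v‖ ^ 2))).congr_deriv ?_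
    rw [inner_sub_left]
    push_cast
    ring
  have hg_nonpos : ∀ t ∈ interior (Set.Icc (0 : ℝ) 1), deriv g t ≤ 0 := by
    intro t ht
    rw [interior_Icc] at ht
    have hstep : ‖f' (x + t • v) - f' x‖ ≤ L * t * ‖v‖ := by
      simpa [norm_smul, abs_of_pos ht.1, mul_assoc] using hlip (x + t • v) x
    rw [(hg t).deriv, sub_nonpos]
    calc ⟪f' (x + t • v) - f' x, v⟫ ≤ ‖f' (x + t • v) - f' x‖ * ‖v‖ := real_inner_le_norm _ _
      _ ≤ L * t * ‖v‖ * ‖v‖ := by gcongr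
      _ = L * t * ‖v‖ ^ 2 := by ring
  have hanti := antitoneOn_of_deriv_nonpos (convex_Icc 0 1)
    (fun t _ => (hg t).continuousAt.continuousWithinAt)
    (fun t _ => (hg t).differentiableAt.differentiableWithinAt) hg_nonpos
  have h := hanti (by norm_num : (0 : ℝ) ∈ Set.Icc 0 1) (by norm_num : (1 : ℝ) ∈ Set.Icc 0 1)
    zero_le_one
  simp only [g, v, one_smul, add_sub_cancel, zero_smul, add_zero] at h
  linarith

end Descent

section Quadratic

variable {E : Type*} [NormedAddCommGroup E] [InnerProductSpace ℝ E]

lemma norm_add_smul_sub_sq (x u d : E) (t : ℝ) :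
    ‖x + t • d - u‖ ^ 2 = ‖x - u‖ ^ 2 + t * (2 * ⟪x - u, d⟫) + t ^ 2 * ‖d‖ ^ 2 := by
  rw [show x + t • d - u = (x - u) + t • d by abel, norm_add_sq_real, inner_smul_right,
    norm_smul, mul_pow, Real.norm_eq_abs, sq_abs]
  ring

lemma eq_zero_of_forall_mul_add_sq_nonneg {g k : ℝ} (h : ∀ t : ℝ, 0 ≤ t * g + t ^ 2 * k) :
    g = 0 := by
  have hdisc := discrim_le_zero (a := k) (b := g) (c := 0) fun t => by linarith [h t]
  rw [discrim] at hdisc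
  nlinarith [sq_nonneg g]

lemma add_mul_sq_norm_sub_eq_of_forall_le {q ℓ : E → ℝ} {k : ℝ} {x : E}
    (hq : ∀ (d : E) (t : ℝ), q (x + t • d) = q x + t * ℓ d + t ^ 2 * (k * ‖d‖ ^ 2))
    (hmin : ∀ y, q x ≤ q y) (y : E) : q x + k * ‖y - x‖ ^ 2 = q y := by
  have hℓ : ℓ (y - x) = 0 :=
    eq_zero_of_forall_mul_add_sq_nonneg (k := k * ‖y - x‖ ^ 2) fun t => by
      linarith [hq (y - x) t, hmin (x + t • (y - x))]
  simpa [hℓ] using (hq (y - x) 1).symm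

end Quadratic

theorem aug_lagrangian_W_step_descent_general
    {H : Type*} [NormedAddCommGroup H] [InnerProductSpace ℝ H] [FiniteDimensional ℝ H]
    (f : H → ℝ) (f' : H → H) (hf : ∀ x, HasGradientAt f (f' x) x)
    (L : ℝ)
    (hlip : ∀ x y : H, ‖f' x - f' y‖ ≤ L * ‖x - y‖)
    (p β : ℝ) (hp : 0 < p) (hβ : 0 < β)
    (Y V W₀ W' : H)
    (hmin : ∀ W : H,
      ⟪(1 / p) • f' W₀ + Y, W'⟫ + (L / (2 * p)) * ‖W' - W₀‖ ^ 2 + (β / 2) * ‖W' - V‖ ^ 2 ≤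
      ⟪(1 / p) • f' W₀ + Y, W⟫ + (L / (2 * p)) * ‖W - W₀‖ ^ 2 + (β / 2) * ‖W - V‖ ^ 2) :
    ((1 / p) * f W' + ⟪Y, W' - V⟫ + (β / 2) * ‖W' - V‖ ^ 2) + (L / (2 * p)) * ‖W' - W₀‖ ^ 2 ≤
      (1 / p) * f W₀ + ⟪Y, W₀ - V⟫ + (β / 2) * ‖W₀ - V‖ ^ 2 := by
  set c := (1 / p) • f' W₀ + Y
  have hgrowth := add_mul_sq_norm_sub_eq_of_forall_le
    (q := fun W => ⟪c, W⟫ + (L / (2 * p)) * ‖W - W₀‖ ^ 2 + (β / 2) * ‖W - V‖ ^ 2)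
    (ℓ := fun d => ⟪c, d⟫ + (L / (2 * p)) * (2 * ⟪W' - W₀, d⟫) + (β / 2) * (2 * ⟪W' - V, d⟫))
    (k := L / (2 * p) + β / 2)
    (fun d t => by simp only [inner_add_right, inner_smul_right, norm_add_smul_sub_sq]; ring)
    hmin W₀
  have hdescent := mul_le_mul_of_nonneg_left
    (le_add_inner_add_sq_of_lipschitz_gradient hf hlip W₀ W') (one_div_nonneg.2 hp.le)
  simp only [c, sub_self, norm_zero, inner_add_left, inner_sub_right, real_inner_smul_left,
    norm_sub_rev W₀ W'] at hgrowth hdescent ⊢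
  have hslack : 0 ≤ β / 2 * ‖W' - W₀‖ ^ 2 := by positivity
  linear_combination hdescent + hgrowth + hslack

/-- descent of one linearized proximal step on the augmented
Lagrangian piece `ℒ(W) = (1/p) f(W) + ⟨Y, W − V⟩ + (β/2)‖W − V‖²`. -/
theorem aug_lagrangian_W_step_descent
    {H : Type*} [NormedAddCommGroup H] [InnerProductSpace ℝ H] [FiniteDimensional ℝ H]
    (f : H → ℝ) (f' : H → H) (hf : ∀ x, HasGradientAt f (f' x) x)
    (L : ℝ) (hL : 0 < L)
    (hlip : ∀ x y : H, ‖f' x - f' y‖ ≤ L * ‖x - y‖)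
    (p β : ℝ) (hp : 0 < p) (hβ : 0 < β)
    (Y V W₀ W' : H)
    (hmin : ∀ W : H,
      ⟪(1 / p) • f' W₀ + Y, W'⟫ + (L / (2 * p)) * ‖W' - W₀‖ ^ 2 + (β / 2) * ‖W' - V‖ ^ 2 ≤
      ⟪(1 / p) • f' W₀ + Y, W⟫ + (L / (2 * p)) * ‖W - W₀‖ ^ 2 + (β / 2) * ‖W - V‖ ^ 2) :
    ((1 / p) * f W' + ⟪Y, W' - V⟫ + (β / 2) * ‖W' - V‖ ^ 2) + (L / (2 * p)) * ‖W' - W₀‖ ^ 2 ≤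
      (1 / p) * f W₀ + ⟪Y, W₀ - V⟫ + (β / 2) * ‖W₀ - V‖ ^ 2 :=
  aug_lagrangian_W_step_descent_general f f' hf L hlip p β hp hβ Y V W₀ W' hmin
end
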